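/- 1ReachU is not contained in 1U; that is, there exists a family of promise problems belonging to 1ReachU that does not belong to 1U. -/

import Mathlib

/-! ## One-way nondeterministic finite automata -/

structure OneNFA (α : Type) : Type 1 where
  Q : Type
  [finQ : Fintype Q]
  start : Q
  next : Q → α → Set Q
  next_nonempty : ∀ q a, (next q a).Nonempty
  acc : Set Q

attribute [instance] OneNFA.finQ

namespace OneNFA

variable {α : Type}

/-- The state complexity (number of inner states). -/
def sc (M : OneNFA α) : ℕ := Fintype.card M.Q

/-- `p` is a computation path of `M` on input `x`. -/
def IsPath (M : OneNFA α) (x : List α) (p : Fin (x.length + 1) → M.Q) : Prop :=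
  p 0 = M.start ∧ ∀ i : Fin x.length, p i.succ ∈ M.next (p i.castSucc) (x.get i)

/-- `p` is an accepting computation path of `M` on input `x`. -/
def IsAccPath (M : OneNFA α) (x : List α) (p : Fin (x.length + 1) → M.Q) : Prop :=
  M.IsPath x p ∧ p (Fin.last x.length) ∈ M.acc

def Accepts (M : OneNFA α) (x : List α) : Prop := ∃ p, M.IsAccPath x p

/-- `M` is a 1dfa: every transition set is a singleton. -/
def Deterministic (M : OneNFA α) : Prop := ∀ q a, ∃ q', M.next q a = {q'}

end OneNFA

/-! ## Families of promise problems -/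

structure PromiseFamily (α : Type) where
  pos : ℕ → Set (List α)
  neg : ℕ → Set (List α)
  disj : ∀ n, Disjoint (pos n) (neg n)

namespace PromiseFamily

def valid {α : Type} (L : PromiseFamily α) (n : ℕ) : Set (List α) := L.pos n ∪ L.neg n

def co {α : Type} (L : PromiseFamily α) : PromiseFamily α :=
  ⟨L.neg, L.pos, fun n => (L.disj n).symm⟩

end PromiseFamily

/-- A family of promise problems over some finite alphabet. -/
structure Family : Type 1 where
  alph : Type
  [finA : Fintype alph]
  prob : PromiseFamily alph

attribute [instance] Family.finA

def Family.co (F : Family) : Family := { alph := F.alph, prob := F.prob.co }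

/-! ## One-way machine families -/

def Solves1 {α : Type} (M : ℕ → OneNFA α) (L : PromiseFamily α) : Prop :=
  ∀ n, (∀ x ∈ L.pos n, (M n).Accepts x) ∧ (∀ x ∈ L.neg n, ¬ (M n).Accepts x)

def PolySize1 {α : Type} (M : ℕ → OneNFA α) : Prop :=
  ∃ p : Polynomial ℕ, ∀ n, (M n).sc ≤ p.eval n

def Unambiguous1 {α : Type} (M : ℕ → OneNFA α) (L : PromiseFamily α) : Prop :=
  ∀ n, ∀ x ∈ L.valid n, {p | (M n).IsAccPath x p}.Subsingleton

def AcceptFew1 {α : Type} (M : ℕ → OneNFA α) (L : PromiseFamily α) : Prop :=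
  ∃ P : MvPolynomial (Fin 2) ℕ, ∀ n, ∀ x ∈ L.valid n,
    {p | (M n).IsAccPath x p}.ncard ≤ MvPolynomial.eval ![n, x.length] P

def WeaklyUnambiguous1 {α : Type} (M : ℕ → OneNFA α) (L : PromiseFamily α) : Prop :=
  ∀ n, ∀ x ∈ L.valid n, ∀ q : (M n).Q,
    {p | (M n).IsAccPath x p ∧ p (Fin.last x.length) = q}.Subsingleton

def ReachUnambiguous1 {α : Type} (M : ℕ → OneNFA α) (L : PromiseFamily α) : Prop :=
  ∀ n, ∀ x ∈ L.valid n, ∀ i ≤ x.length, ∀ q : (M n).Q,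
    {p : Fin ((x.take i).length + 1) → (M n).Q |
      (M n).IsPath (x.take i) p ∧ p (Fin.last (x.take i).length) = q}.Subsingleton

def ReachFew1 {α : Type} (M : ℕ → OneNFA α) (L : PromiseFamily α) : Prop :=
  ∃ P : MvPolynomial (Fin 2) ℕ, ∀ n, ∀ x ∈ L.valid n, ∀ i ≤ x.length, ∀ q : (M n).Q,
    {p : Fin ((x.take i).length + 1) → (M n).Q |
      (M n).IsPath (x.take i) p ∧ p (Fin.last (x.take i).length) = q}.ncard ≤
      MvPolynomial.eval ![n, x.length] P

/-! ## One-way nonuniform state complexity classes -/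

def oneN : Set Family :=
  {F | ∃ M : ℕ → OneNFA F.alph, PolySize1 M ∧ Solves1 M F.prob}

def oneD : Set Family :=
  {F | ∃ M : ℕ → OneNFA F.alph, PolySize1 M ∧ (∀ n, (M n).Deterministic) ∧ Solves1 M F.prob}

def oneU : Set Family :=
  {F | ∃ M : ℕ → OneNFA F.alph, PolySize1 M ∧ Unambiguous1 M F.prob ∧ Solves1 M F.prob}

def oneFew : Set Family :=
  {F | ∃ M : ℕ → OneNFA F.alph, PolySize1 M ∧ AcceptFew1 M F.prob ∧ Solves1 M F.prob}

def oneFewU : Set Family :=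
  {F | ∃ M : ℕ → OneNFA F.alph, PolySize1 M ∧ AcceptFew1 M F.prob ∧
        WeaklyUnambiguous1 M F.prob ∧ Solves1 M F.prob}

def oneReachU : Set Family :=
  {F | ∃ M : ℕ → OneNFA F.alph, PolySize1 M ∧ AcceptFew1 M F.prob ∧
        ReachUnambiguous1 M F.prob ∧ Solves1 M F.prob}

def oneReachFew : Set Family :=
  {F | ∃ M : ℕ → OneNFA F.alph, PolySize1 M ∧ AcceptFew1 M F.prob ∧
        ReachFew1 M F.prob ∧ Solves1 M F.prob}

def oneReachFewU : Set Family :=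
  {F | ∃ M : ℕ → OneNFA F.alph, PolySize1 M ∧ AcceptFew1 M F.prob ∧
        ReachFew1 M F.prob ∧ WeaklyUnambiguous1 M F.prob ∧ Solves1 M F.prob}

/-- The complement class `co-C`. -/
def coC (C : Set Family) : Set Family := {F | F.co ∈ C}
/-! ## Two-way nondeterministic finite automata -/

/-- A tape symbol: either an input symbol, the left endmarker `Sum.inr false`,
or the right endmarker `Sum.inr true`. -/
def TapeSym (α : Type) : Type := α ⊕ Bool

/-- The symbol held in cell `i` of the tape containing `▷x◁`. -/
def tapeAt {α : Type} (x : List α) (i : ℕ) : TapeSym α :=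
  if h0 : i = 0 then Sum.inr false
  else if h : i ≤ x.length then Sum.inl (x.get ⟨i - 1, by omega⟩)
  else Sum.inr true

structure TwoNFA (α : Type) : Type 1 where
  Q : Type
  [finQ : Fintype Q]
  start : Q
  acc : Set Q
  rej : Set Q
  acc_rej_disj : Disjoint acc rej
  next : Q → TapeSym α → Set (Q × ℤ)
  next_dir : ∀ q a t, t ∈ next q a → t.2 = -1 ∨ t.2 = 0 ∨ t.2 = 1

attribute [instance] TwoNFA.finQ

namespace TwoNFA

variable {α : Type}

def sc (M : TwoNFA α) : ℕ := Fintype.card M.Q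

def Halting (M : TwoNFA α) (q : M.Q) : Prop := q ∈ M.acc ∨ q ∈ M.rej

/-- Configuration `c` yields configuration `c'` in one step on input `x`. -/
def Yields (M : TwoNFA α) (x : List α) (c c' : M.Q × ℕ) : Prop :=
  ¬ M.Halting c.1 ∧ c.2 ≤ x.length + 1 ∧ c'.2 ≤ x.length + 1 ∧
    ∃ d : ℤ, (c'.1, d) ∈ M.next c.1 (tapeAt x c.2) ∧ (c'.2 : ℤ) = (c.2 : ℤ) + d

/-- A partial computation path of length `k` of `M` on `x`. -/
def IsPartialPath (M : TwoNFA α) (x : List α) (k : ℕ) (p : Fin (k + 1) → M.Q × ℕ) : Prop :=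
  p 0 = (M.start, 0) ∧ ∀ i : Fin k, M.Yields x (p i.castSucc) (p i.succ)

/-- A (full) computation path: the final configuration is the only halting one. -/
def IsCompPath (M : TwoNFA α) (x : List α) (k : ℕ) (p : Fin (k + 1) → M.Q × ℕ) : Prop :=
  M.IsPartialPath x k p ∧ ∀ i : Fin (k + 1), (M.Halting (p i).1 ↔ i = Fin.last k)

def IsAccPath (M : TwoNFA α) (x : List α) (k : ℕ) (p : Fin (k + 1) → M.Q × ℕ) : Prop :=
  M.IsCompPath x k p ∧ (p (Fin.last k)).1 ∈ M.acc

def Accepts (M : TwoNFA α) (x : List α) : Prop := ∃ k p, M.IsAccPath x k p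

def Deterministic (M : TwoNFA α) : Prop := ∀ q a, ∃ t, M.next q a = {t}

/-- The set of accepting computation paths of `M` on `x`. -/
def accPaths (M : TwoNFA α) (x : List α) : Set ((k : ℕ) × (Fin (k + 1) → M.Q × ℕ)) :=
  {kp | M.IsAccPath x kp.1 kp.2}

/-- The set of computation paths of `M` on `x` ending at configuration `conf`. -/
def compPathsTo (M : TwoNFA α) (x : List α) (conf : M.Q × ℕ) :
    Set ((k : ℕ) × (Fin (k + 1) → M.Q × ℕ)) :=
  {kp | M.IsCompPath x kp.1 kp.2 ∧ kp.2 (Fin.last kp.1) = conf}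

/-- The set of partial computation paths of `M` on `x` ending at configuration `conf`. -/
def partialPathsTo (M : TwoNFA α) (x : List α) (conf : M.Q × ℕ) :
    Set ((k : ℕ) × (Fin (k + 1) → M.Q × ℕ)) :=
  {kp | M.IsPartialPath x kp.1 kp.2 ∧ kp.2 (Fin.last kp.1) = conf}

end TwoNFA

/-! ## Two-way machine families -/

def Solves2 {α : Type} (M : ℕ → TwoNFA α) (L : PromiseFamily α) : Prop :=
  ∀ n, (∀ x ∈ L.pos n, (M n).Accepts x) ∧ (∀ x ∈ L.neg n, ¬ (M n).Accepts x)

def PolySize2 {α : Type} (M : ℕ → TwoNFA α) : Prop :=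
  ∃ p : Polynomial ℕ, ∀ n, (M n).sc ≤ p.eval n

def Unambiguous2 {α : Type} (M : ℕ → TwoNFA α) (L : PromiseFamily α) : Prop :=
  ∀ n, ∀ x ∈ L.valid n, ((M n).accPaths x).Subsingleton

def AcceptFew2 {α : Type} (M : ℕ → TwoNFA α) (L : PromiseFamily α) : Prop :=
  ∃ P : MvPolynomial (Fin 2) ℕ, ∀ n, ∀ x ∈ L.valid n,
    ((M n).accPaths x).encard ≤ (MvPolynomial.eval ![n, x.length] P : ℕ∞)

def WeaklyUnambiguous2 {α : Type} (M : ℕ → TwoNFA α) (L : PromiseFamily α) : Prop :=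
  ∀ n, ∀ x ∈ L.valid n, ∀ conf : (M n).Q × ℕ, conf.1 ∈ (M n).acc →
    ((M n).compPathsTo x conf).Subsingleton

def ReachUnambiguous2 {α : Type} (M : ℕ → TwoNFA α) (L : PromiseFamily α) : Prop :=
  ∀ n, ∀ x ∈ L.valid n, ∀ conf : (M n).Q × ℕ,
    ((M n).partialPathsTo x conf).Subsingleton

def ReachFew2 {α : Type} (M : ℕ → TwoNFA α) (L : PromiseFamily α) : Prop :=
  ∃ P : MvPolynomial (Fin 2) ℕ, ∀ n, ∀ x ∈ L.valid n, ∀ conf : (M n).Q × ℕ,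
    ((M n).partialPathsTo x conf).encard ≤ (MvPolynomial.eval ![n, x.length] P : ℕ∞)

/-! ## Two-way nonuniform state complexity classes -/

def twoN : Set Family :=
  {F | ∃ M : ℕ → TwoNFA F.alph, PolySize2 M ∧ Solves2 M F.prob}

def twoD : Set Family :=
  {F | ∃ M : ℕ → TwoNFA F.alph, PolySize2 M ∧ (∀ n, (M n).Deterministic) ∧ Solves2 M F.prob}

def twoU : Set Family :=
  {F | ∃ M : ℕ → TwoNFA F.alph, PolySize2 M ∧ Unambiguous2 M F.prob ∧ Solves2 M F.prob}

def twoFew : Set Family :=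
  {F | ∃ M : ℕ → TwoNFA F.alph, PolySize2 M ∧ AcceptFew2 M F.prob ∧ Solves2 M F.prob}

def twoFewU : Set Family :=
  {F | ∃ M : ℕ → TwoNFA F.alph, PolySize2 M ∧ AcceptFew2 M F.prob ∧
        WeaklyUnambiguous2 M F.prob ∧ Solves2 M F.prob}

def twoReachU : Set Family :=
  {F | ∃ M : ℕ → TwoNFA F.alph, PolySize2 M ∧ AcceptFew2 M F.prob ∧
        ReachUnambiguous2 M F.prob ∧ Solves2 M F.prob}

def twoReachFew : Set Family :=
  {F | ∃ M : ℕ → TwoNFA F.alph, PolySize2 M ∧ AcceptFew2 M F.prob ∧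
        ReachFew2 M F.prob ∧ Solves2 M F.prob}

def twoReachFewU : Set Family :=
  {F | ∃ M : ℕ → TwoNFA F.alph, PolySize2 M ∧ AcceptFew2 M F.prob ∧
        ReachFew2 M F.prob ∧ WeaklyUnambiguous2 M F.prob ∧ Solves2 M F.prob}

/-! ## Ceilings -/

/-- The family `F` has an `f(n)`-ceiling. -/
def HasCeiling (F : Family) (f : ℕ → ℕ) : Prop :=
  ∀ n, ∀ x ∈ F.prob.valid n, x.length ≤ f n

/-- The restriction `C/F` of a class `C` to families having an `f`-ceiling for some `f ∈ S`. -/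
def ceil (C : Set Family) (S : Set (ℕ → ℕ)) : Set Family :=
  {F | F ∈ C ∧ ∃ f ∈ S, HasCeiling F f}

def polyFuns : Set (ℕ → ℕ) := {f | ∃ p : Polynomial ℕ, ∀ n, f n = p.eval n}

/-- Super-exponential functions: `f(n) > 2^{p(n)}` for all but finitely many `n`,
for every polynomial `p`. -/
def supexpFuns : Set (ℕ → ℕ) :=
  {f | ∀ p : Polynomial ℕ, ∃ N, ∀ n ≥ N, 2 ^ p.eval n < f n}

/-- `F` has a logarithmic ceiling `ℓ(n) = a·log₂ n + b` with constants `a, b ≥ 0`. -/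
def HasLogCeiling (F : Family) : Prop :=
  ∃ a b : ℝ, 0 ≤ a ∧ 0 ≤ b ∧
    ∀ n, ∀ x ∈ F.prob.valid n, (x.length : ℝ) ≤ a * Real.logb 2 n + b

/-- The restriction `C/log` of a class `C` to families having logarithmic ceilings. -/
def ceilLog (C : Set Family) : Set Family := {F | F ∈ C ∧ HasLogCeiling F}
/-! ## The alphabet `{0, 1, #}` and encodings -/

inductive Sym3 : Type
  | zero | one | hash
deriving DecidableEq

instance : Fintype Sym3 :=
  ⟨{Sym3.zero, Sym3.one, Sym3.hash}, by intro x; cases x <;> simp⟩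

/-- The block `1^i 0^{m-i}`. -/
def block (m i : ℕ) : List Sym3 :=
  List.replicate i Sym3.one ++ List.replicate (m - i) Sym3.zero

lemma block_length {m i : ℕ} (h : i ≤ m) : (block m i).length = m := by
  simp [block]; omega

lemma block_count {m : ℕ} (i : ℕ) : (block m i).count Sym3.one = i := by
  simp [block, List.count_append, List.count_replicate]

lemma block_inj {m i j : ℕ} (h : block m i = block m j) : i = j := by
  have := block_count (m := m) i
  rw [h, block_count] at this
  omega

/-- The encoding `[[i₁,…,i_k]]_m` of a list of numbers. -/
def enc (m : ℕ) : List ℕ → List Sym3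
  | [] => []
  | [i] => block m i
  | i :: j :: rest => block m i ++ Sym3.zero :: enc m (j :: rest)

/-- Lists of length `k` with entries in `[n]`. -/
def ValidList (n k : ℕ) (l : List ℕ) : Prop :=
  l.length = k ∧ ∀ i ∈ l, 1 ≤ i ∧ i ≤ n

lemma enc_length {m : ℕ} :
    ∀ l : List ℕ, (∀ i ∈ l, i ≤ m) → (enc m l).length = l.length * (m + 1) - 1
  | [] => by simp [enc]
  | [i] => by
      intro h
      simp [enc, block_length (h i (by simp))]
  | i :: j :: rest => by
      intro h
      have ih := enc_length (j :: rest) (fun a ha => h a (List.mem_cons_of_mem _ ha))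
      have hb : (block m i).length = m := block_length (h i (List.mem_cons_self))
      show (block m i ++ Sym3.zero :: enc m (j :: rest)).length = _
      rw [List.length_append, hb, List.length_cons, ih]
      have hc : (i :: j :: rest).length = (j :: rest).length + 1 := by simp
      rw [hc]
      set L := (j :: rest).length with hLdef
      have hL : 1 ≤ L := by simp [hLdef]
      have h1 : (L + 1) * (m + 1) = L * (m + 1) + (m + 1) := by ring
      rw [h1]
      set P := L * (m + 1) with hPdef
      have hP : 1 ≤ P := by
        have := Nat.mul_le_mul hL (Nat.le_add_left 1 m)
        simpa [hPdef] using this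
      omega

lemma enc_ne_nil {m : ℕ} (i : ℕ) (rest : List ℕ) (hi : 1 ≤ i) :
    enc m (i :: rest) ≠ [] := by
  cases rest with
  | nil =>
      simp only [enc, block]
      intro h
      have := congrArg List.length h
      simp at this
      omega
  | cons j rest' =>
      simp only [enc]
      intro h
      have := congrArg List.length h
      simp at this

lemma enc_inj {m : ℕ} :
    ∀ u w : List ℕ, (∀ i ∈ u, 1 ≤ i ∧ i ≤ m) → (∀ i ∈ w, 1 ≤ i ∧ i ≤ m) →
      enc m u = enc m w → u = w
  | [], [], _, _, _ => rfl
  | [], j :: w', _, hw, h => by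
      exact absurd h.symm (enc_ne_nil j w' (hw j (by simp)).1)
  | i :: u', [], hu, _, h => by
      exact absurd h (enc_ne_nil i u' (hu i (by simp)).1)
  | [i], [j], hu, hw, h => by
      simp only [enc] at h
      rw [block_inj h]
  | [i], j :: b :: w', hu, hw, h => by
      exfalso
      have hl := congrArg List.length h
      rw [show enc m [i] = block m i from rfl,
        show enc m (j :: b :: w') = block m j ++ Sym3.zero :: enc m (b :: w') from rfl] at hl
      rw [List.length_append, List.length_cons,
        block_length (hu i (by simp)).2, block_length (hw j (by simp)).2] at hl
      omega
  | i :: a :: u', [j], hu, hw, h => by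
      exfalso
      have hl := congrArg List.length h
      rw [show enc m [j] = block m j from rfl,
        show enc m (i :: a :: u') = block m i ++ Sym3.zero :: enc m (a :: u') from rfl] at hl
      rw [List.length_append, List.length_cons,
        block_length (hu i (by simp)).2, block_length (hw j (by simp)).2] at hl
      omega
  | i :: a :: u', j :: b :: w', hu, hw, h => by
      rw [show enc m (i :: a :: u') = block m i ++ Sym3.zero :: enc m (a :: u') from rfl,
        show enc m (j :: b :: w') = block m j ++ Sym3.zero :: enc m (b :: w') from rfl] at h
      have hlen : (block m i).length = (block m j).length := by
        rw [block_length (hu i (by simp)).2, block_length (hw j (by simp)).2]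
      obtain ⟨h1, h2⟩ := List.append_inj h hlen
      have h3 : enc m (a :: u') = enc m (b :: w') := by
        simpa using h2
      have ih := enc_inj (a :: u') (b :: w')
        (fun x hx => hu x (List.mem_cons_of_mem _ hx))
        (fun x hx => hw x (List.mem_cons_of_mem _ hx)) h3
      rw [block_inj h1, ih]
/-! ## The promise problem family `L₁` -/

def L1pos (n : ℕ) : Set (List Sym3) :=
  {x | ∃ u v : List ℕ, ValidList n n u ∧ ValidList n n v ∧ u ≠ v ∧
        x = enc n u ++ Sym3.hash :: enc n v}

def L1neg (n : ℕ) : Set (List Sym3) :=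
  {x | ∃ u v : List ℕ, ValidList n n u ∧ ValidList n n v ∧ u = v ∧
        x = enc n u ++ Sym3.hash :: enc n v}

lemma L1_disj (n : ℕ) : Disjoint (L1pos n) (L1neg n) := by
  rw [Set.disjoint_left]
  rintro x ⟨u, v, hu, hv, huv, rfl⟩ ⟨u', v', hu', hv', huv', heq⟩
  have hlen : (enc n u).length = (enc n u').length := by
    rw [enc_length u (fun i hi => (hu.2 i hi).2),
      enc_length u' (fun i hi => (hu'.2 i hi).2), hu.1, hu'.1]
  obtain ⟨h1, h2⟩ := List.append_inj heq hlen
  have h2' : enc n v = enc n v' := by simpa using h2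
  have e1 : u = u' := enc_inj u u' hu.2 hu'.2 h1
  have e2 : v = v' := enc_inj v v' hv.2 hv'.2 h2'
  exact huv (by rw [e1, e2, huv'])

def L1prob : PromiseFamily Sym3 := ⟨L1pos, L1neg, L1_disj⟩

def L1fam : Family := { alph := Sym3, prob := L1prob }

/-! ## Matrices, their encodings, and the promise problem family `L₂` -/

/-- `R` represents an `n × n` matrix with entries in `[n]`, given as its list of rows. -/
def ValidMat (n : ℕ) (R : List (List ℕ)) : Prop :=
  R.length = n ∧ ∀ r ∈ R, ValidList n n r

/-- The encoding `[[D]]_n` of a matrix: its encoded rows joined by `#`. -/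
def encMat (n : ℕ) : List (List ℕ) → List Sym3
  | [] => []
  | [r] => enc n r
  | r :: s :: rest => enc n r ++ Sym3.hash :: encMat n (s :: rest)

lemma encMat_len {n : ℕ} :
    ∀ R : List (List ℕ), (∀ r ∈ R, ValidList n n r) →
      (encMat n R).length = R.length * (n * (n + 1) - 1 + 1) - 1
  | [] => by simp [encMat]
  | [r] => by
      intro h
      have hr := h r (by simp)
      have he : (enc n r).length = n * (n + 1) - 1 := by
        rw [enc_length r (fun i hi => (hr.2 i hi).2), hr.1]
      show (enc n r).length = ([r] : List (List ℕ)).length * (n * (n + 1) - 1 + 1) - 1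
      rw [he, show ([r] : List (List ℕ)).length = 1 from rfl]
      omega
  | r :: s :: rest => by
      intro h
      have ih := encMat_len (s :: rest) (fun a ha => h a (List.mem_cons_of_mem _ ha))
      have hr := h r (by simp)
      have he : (enc n r).length = n * (n + 1) - 1 := by
        rw [enc_length r (fun i hi => (hr.2 i hi).2), hr.1]
      show (enc n r ++ Sym3.hash :: encMat n (s :: rest)).length = _
      rw [List.length_append, he, List.length_cons, ih]
      have hc : (r :: s :: rest).length = (s :: rest).length + 1 := by simp
      rw [hc]
      set e := n * (n + 1) - 1 with hedef
      set L := (s :: rest).length with hLdef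
      have hL : 1 ≤ L := by simp [hLdef]
      have h1 : (L + 1) * (e + 1) = L * (e + 1) + (e + 1) := by ring
      rw [h1]
      set P := L * (e + 1) with hPdef
      have hP : 1 ≤ P := by
        calc 1 = 1 * 1 := by ring
        _ ≤ L * (e + 1) := Nat.mul_le_mul hL (by omega)
      omega

lemma encMat_inj {n : ℕ} :
    ∀ R W : List (List ℕ), (∀ r ∈ R, ValidList n n r) → (∀ r ∈ W, ValidList n n r) →
      R.length = W.length → encMat n R = encMat n W → R = W
  | [], [], _, _, _, _ => rfl
  | [], _ :: _, _, _, hl, _ => by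
      simp only [List.length_cons, List.length_nil] at hl
      omega
  | _ :: _, [], _, _, hl, _ => by
      simp only [List.length_cons, List.length_nil] at hl
      omega
  | [r], [w], hR, hW, _, h => by
      have := enc_inj r w (hR r (by simp)).2 (hW w (by simp)).2 h
      rw [this]
  | [r], w :: w' :: W', _, _, hl, _ => by
      simp only [List.length_cons, List.length_nil] at hl
      omega
  | r :: r' :: R', [w], _, _, hl, _ => by
      simp only [List.length_cons, List.length_nil] at hl
      omega
  | r :: r' :: R', w :: w' :: W', hR, hW, hl, h => by
      rw [show encMat n (r :: r' :: R') = enc n r ++ Sym3.hash :: encMat n (r' :: R') from rfl,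
        show encMat n (w :: w' :: W') = enc n w ++ Sym3.hash :: encMat n (w' :: W') from rfl] at h
      have hrlen : (enc n r).length = (enc n w).length := by
        have h1 := hR r (by simp); have h2 := hW w (by simp)
        rw [enc_length r (fun i hi => (h1.2 i hi).2),
          enc_length w (fun i hi => (h2.2 i hi).2), h1.1, h2.1]
      obtain ⟨h1, h2⟩ := List.append_inj h hrlen
      have h3 : encMat n (r' :: R') = encMat n (w' :: W') := by simpa using h2
      have ihr := enc_inj r w (hR r (by simp)).2 (hW w (by simp)).2 h1
      have ih := encMat_inj (r' :: R') (w' :: W')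
        (fun a ha => hR a (List.mem_cons_of_mem _ ha))
        (fun a ha => hW a (List.mem_cons_of_mem _ ha))
        (by simpa using hl) h3
      rw [ihr, ih]

/-- `SelSum R s` holds iff `s` is obtained by choosing one entry from each row of `R`
(the value `sum_D(σ)` for some choice function `σ`). -/
inductive SelSum : List (List ℕ) → ℕ → Prop
  | nil : SelSum [] 0
  | cons {a : ℕ} {r : List ℕ} {rest : List (List ℕ)} {s : ℕ} :
      a ∈ r → SelSum rest s → SelSum (r :: rest) (a + s)

def L2pos (n : ℕ) : Set (List Sym3) :=
  {x | ∃ R R' : List (List ℕ), ValidMat n R ∧ ValidMat n R' ∧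
        (∃ s : ℕ, SelSum R s ∧ SelSum R' s) ∧
        x = encMat n R ++ Sym3.hash :: Sym3.hash :: encMat n R'}

def L2neg (n : ℕ) : Set (List Sym3) :=
  {x | ∃ R R' : List (List ℕ), ValidMat n R ∧ ValidMat n R' ∧
        (∀ s s' : ℕ, SelSum R s → SelSum R' s' → s ≠ s') ∧
        x = encMat n R ++ Sym3.hash :: Sym3.hash :: encMat n R'}

lemma L2_disj (n : ℕ) : Disjoint (L2pos n) (L2neg n) := by
  rw [Set.disjoint_left]
  rintro x ⟨R, R', hR, hR', ⟨s, hs, hs'⟩, rfl⟩ ⟨W, W', hW, hW', hne, heq⟩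
  have hlen : (encMat n R).length = (encMat n W).length := by
    rw [encMat_len R hR.2, encMat_len W hW.2, hR.1, hW.1]
  obtain ⟨h1, h2⟩ := List.append_inj heq hlen
  have h2' : encMat n R' = encMat n W' := by simpa using h2
  have e1 : R = W := encMat_inj R W hR.2 hW.2 (by rw [hR.1, hW.1]) h1
  have e2 : R' = W' := encMat_inj R' W' hR'.2 hW'.2 (by rw [hR'.1, hW'.1]) h2'
  exact hne s s (e1 ▸ hs) (e2 ▸ hs') rfl

def L2prob : PromiseFamily Sym3 := ⟨L2pos, L2neg, L2_disj⟩

def L2fam : Family := { alph := Sym3, prob := L2prob }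
/-! ## One-way probabilistic finite automata data -/

/-- Product of the matrices of the symbols of a word. -/
noncomputable def wordMatrix {α Q : Type} [Fintype Q] [DecidableEq Q]
    (Mσ : TapeSym α → Matrix Q Q ℝ) (w : List (TapeSym α)) : Matrix Q Q ℝ :=
  (w.map Mσ).prod

/-- The tape word `▷ x ◁`. -/
def tapeWord {α : Type} (x : List α) : List (TapeSym α) :=
  Sum.inr false :: (x.map Sum.inl ++ [Sum.inr true])

/-- `p_{acc}(x : q)`: the `q`-entry of the row vector `ν · M_{▷x◁}`. -/
noncomputable def pacc {α Q : Type} [Fintype Q] [DecidableEq Q]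
    (ν : Q → ℝ) (Mσ : TapeSym α → Matrix Q Q ℝ) (x : List α) (q : Q) : ℝ :=
  Matrix.vecMul ν (wordMatrix Mσ (tapeWord x)) q
/-!
The witness consists of the words `u ++ v` with `u, v ∈ {0,1}^(n+1)`, positive when `u ≠ v` and
negative when `u = v`. A 1nfa guesses a position `j` on its first move and then deterministically
compares `u j` with `v j`; its states remember `j`, so every state is reached along at most one
computation path, and `n + 1` comparison automata with `O(n)` states suffice. (Blocks have
length `n + 1` so that there is always a position to guess.)

Conversely, let `M` be unambiguous on these words. Writing `B u q = [M reaches q on u]` and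
`C q v = [M accepts v from q]`, unambiguity forces at most one state `q` with `B u q = C q v = 1`,
so `B * C` is the matrix `J - I` of the inequality relation on `{0,1}^(n+1)`. This matrix is
invertible, hence `2^(n+1) = rank (B * C) ≤ |Q|`, which no polynomial bound allows.
-/

open Filter Asymptotics

lemma Polynomial.exists_eval_lt_two_pow (P : Polynomial ℕ) : ∃ n : ℕ, P.eval n < 2 ^ n := by
  let f := P.map (Nat.castRingHom ℝ)
  have hpow : f.eval =O[atTop] fun x => x ^ f.natDegree := by
    simpa using Polynomial.isBigO_atTop_of_degree_le f (Polynomial.X ^ f.natDegree)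
      (Polynomial.degree_le_natDegree.trans (by simp))
  have hf : (fun n : ℕ => f.eval (n : ℝ)) =o[atTop] fun n => (2 : ℝ) ^ n :=
    (hpow.comp_tendsto tendsto_natCast_atTop_atTop).trans_isLittleO
      (isLittleO_pow_const_const_pow_of_one_lt f.natDegree one_lt_two)
  obtain ⟨n, hn⟩ := (hf.def one_half_pos).exists
  refine ⟨n, ?_⟩
  simp only [f, Polynomial.eval_natCast_map, eq_natCast, Nat.cast_id, Real.norm_eq_abs, Nat.abs_cast,
    abs_pow, abs_two] at hn
  have h2 : (0 : ℝ) < 2 ^ n := by positivity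
  exact_mod_cast (show ((P.eval n : ℕ) : ℝ) < 2 ^ n by linarith)

lemma Matrix.rank_allOnes_sub_one {A K : Type} [Fintype A] [DecidableEq A] [Field K]
    (h : (Fintype.card A : K) ≠ 1) :
    (Matrix.of (fun _ _ => (1 : K)) - 1 : Matrix A A K).rank = Fintype.card A := by
  have hJ : (Matrix.of (fun _ _ => (1 : K)) - 1 : Matrix A A K) =
      -(1 + Matrix.replicateCol Unit (fun _ : A => (-1 : K)) *
        Matrix.replicateRow Unit (fun _ : A => (1 : K))) := by
    ext a b
    simp only [Matrix.sub_apply, Matrix.of_apply, Matrix.neg_apply, Matrix.add_apply,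
      Matrix.mul_apply, Matrix.replicateCol_apply, Matrix.replicateRow_apply, Finset.univ_unique,
      Finset.sum_singleton]
    ring
  have hdet : (Matrix.of (fun _ _ => (1 : K)) - 1 : Matrix A A K).det ≠ 0 := by
    rw [hJ, Matrix.det_neg, Matrix.det_one_add_replicateCol_mul_replicateRow]
    simp only [dotProduct, mul_neg, mul_one, Finset.sum_neg_distrib, Finset.sum_const,
      Finset.card_univ, nsmul_eq_mul, ne_eq, mul_eq_zero, pow_eq_zero_iff', neg_eq_zero,
      one_ne_zero, false_and, false_or]
    exact fun h' => h (by linear_combination -h')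
  exact Matrix.rank_of_isUnit _ ((Matrix.isUnit_iff_isUnit_det _).2 hdet.isUnit)

lemma Fintype.sum_ite_of_subsingleton {ι R : Type*} [Fintype ι] [AddCommMonoid R] {P : ι → Prop}
    [DecidablePred P] (hP : {i | P i}.Subsingleton) (r : R) :
    ∑ i, (if P i then r else 0) = if ∃ i, P i then r else 0 := by
  split_ifs with h
  · obtain ⟨i, hi⟩ := h
    rw [Fintype.sum_eq_single i fun j hj => if_neg fun hPj : P j => hj (hP hPj hi), if_pos hi]
  · exact Finset.sum_eq_zero fun i _ => if_neg fun hi => h ⟨i, hi⟩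

lemma DFA.eval_take_succ {α σ : Type*} (M : DFA α σ) (x : List α) (k : Fin x.length) :
    M.eval (x.take (k + 1)) = M.step (M.eval (x.take k)) (x.get k) := by
  rw [List.take_add_one, List.getElem?_eq_getElem k.isLt, Option.toList_some,
    DFA.eval_append_singleton, List.get_eq_getElem]

namespace OneNFA

variable {α : Type}

def ReachUnambiguous (M : OneNFA α) : Prop :=
  ∀ x p p', M.IsPath x p → M.IsPath x p' → p (Fin.last x.length) = p' (Fin.last x.length) → p = p'

lemma ncard_accPaths_le_sc {M : OneNFA α} (hM : M.ReachUnambiguous) (x : List α) :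
    {p | M.IsAccPath x p}.ncard ≤ M.sc := by
  rw [sc, ← Nat.card_eq_fintype_card, ← Set.ncard_univ]
  exact Set.ncard_le_ncard_of_injOn (fun p => p (Fin.last x.length))
    (fun _ _ => Set.mem_univ _) (fun p hp p' hp' h => hM x p p' hp.1 hp'.1 h) Set.finite_univ

def ofDFAs {ι σ : Type} [Fintype ι] [Nonempty ι] [Fintype σ] (D : ι → DFA α σ) : OneNFA α where
  Q := Option (ι × σ)
  start := none
  next
    | none, a => Set.range fun i => some (i, (D i).step (D i).start a)
    | some (i, s), a => {some (i, (D i).step s a)}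
  next_nonempty
    | none, _ => Set.range_nonempty _
    | some _, _ => Set.singleton_nonempty _
  acc := {q | q.elim (∃ i, [] ∈ (D i).accepts) fun is => is.2 ∈ (D is.1).accept}

section ofDFAs

variable {ι σ : Type} (D : ι → DFA α σ)

def guessPath (x : List α) (i : ι) (k : Fin (x.length + 1)) : Option (ι × σ) :=
  if (k : ℕ) = 0 then none else some (i, (D i).eval (x.take k))

lemma guessPath_last (x : List α) (i : ι) :
    guessPath D x i (Fin.last x.length) = if x = [] then none else some (i, (D i).eval x) := by
  simp [guessPath]

variable [Fintype ι] [Nonempty ι] [Fintype σ]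

lemma mem_next_guessPath (x : List α) (i : ι) (k : Fin x.length) :
    guessPath D x i k.succ ∈ (ofDFAs D).next (guessPath D x i k.castSucc) (x.get k) := by
  simp only [guessPath, Fin.val_succ, Nat.add_one_ne_zero, if_false, DFA.eval_take_succ,
    Fin.val_castSucc]
  split_ifs with hk
  · rw [hk, List.take_zero, DFA.eval_nil]
    exact ⟨i, rfl⟩
  · rfl

lemma next_guessPath_of_ne_zero (x : List α) (i : ι) {k : Fin x.length} (hk : (k : ℕ) ≠ 0) :
    (ofDFAs D).next (guessPath D x i k.castSucc) (x.get k) = {guessPath D x i k.succ} := by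
  simp only [guessPath, Fin.val_castSucc, Fin.val_succ, hk, Nat.add_one_ne_zero, if_false,
    DFA.eval_take_succ]
  rfl

lemma isPath_ofDFAs_iff {x : List α} {p : Fin (x.length + 1) → Option (ι × σ)} :
    (ofDFAs D).IsPath x p ↔ ∃ i, p = guessPath D x i := by
  constructor
  · rintro ⟨h0, hstep⟩
    rcases Nat.eq_zero_or_pos x.length with hx | hx
    · obtain ⟨i⟩ := ‹Nonempty ι›
      refine ⟨i, funext fun k => ?_⟩
      obtain rfl : k = 0 := Fin.ext (by omega)
      exact h0
    have h1 := hstep ⟨0, hx⟩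
    rw [Fin.castSucc_mk, Fin.mk_zero, h0] at h1
    obtain ⟨i, hi⟩ := h1
    refine ⟨i, funext fun k => ?_⟩
    induction k using Fin.induction with
    | zero => exact h0
    | succ k ih =>
      by_cases hk : (k : ℕ) = 0
      · obtain rfl : k = ⟨0, hx⟩ := Fin.ext hk
        rw [← hi]
        simpa [guessPath] using ((D i).eval_take_succ x ⟨0, hx⟩).symm
      · have := hstep k
        rw [ih, next_guessPath_of_ne_zero D x i hk] at this
        exact this
  · rintro ⟨i, rfl⟩
    exact ⟨if_pos rfl, mem_next_guessPath D x i⟩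

lemma reachUnambiguous_ofDFAs : (ofDFAs D).ReachUnambiguous := by
  intro x p p' hp hp' hlast
  obtain ⟨i, rfl⟩ := (isPath_ofDFAs_iff D).1 hp
  obtain ⟨i', rfl⟩ := (isPath_ofDFAs_iff D).1 hp'
  rw [guessPath_last, guessPath_last] at hlast
  by_cases hx : x = []
  · subst hx
    funext k
    simp [guessPath, Fin.fin_one_eq_zero k]
  · simp only [hx, if_false] at hlast
    have hi : i = i' := (Prod.ext_iff.1 (Option.some.inj hlast)).1
    subst hi
    rfl

lemma accepts_ofDFAs_iff (x : List α) : (ofDFAs D).Accepts x ↔ ∃ i, x ∈ (D i).accepts := by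
  constructor
  · rintro ⟨p, hp, hacc⟩
    obtain ⟨i, rfl⟩ := (isPath_ofDFAs_iff D).1 hp
    rw [guessPath_last] at hacc
    split_ifs at hacc with hx
    · subst hx
      exact hacc
    · exact ⟨i, hacc⟩
  · rintro ⟨i, hi⟩
    refine ⟨guessPath D x i, (isPath_ofDFAs_iff D).2 ⟨i, rfl⟩, ?_⟩
    rw [guessPath_last]
    split_ifs with hx
    · subst hx
      exact ⟨i, hi⟩
    · exact hi

lemma sc_ofDFAs : (ofDFAs D).sc = Fintype.card ι * Fintype.card σ + 1 :=
  Fintype.card_option.trans (congrArg (· + 1) (Fintype.card_prod ι σ))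

end ofDFAs

abbrev withStart (M : OneNFA α) (q : M.Q) : OneNFA α := { M with start := q }

def Reaches (M : OneNFA α) (x : List α) (q : M.Q) : Prop :=
  ∃ p, M.IsPath x p ∧ p (Fin.last x.length) = q

lemma reaches_and_accepts_of_isAccPath_append {M : OneNFA α} {u v : List α}
    {p : Fin ((u ++ v).length + 1) → M.Q} (hp : M.IsAccPath (u ++ v) p) :
    M.Reaches u (p ⟨u.length, by simp⟩) ∧ (M.withStart (p ⟨u.length, by simp⟩)).Accepts v := by
  obtain ⟨⟨h0, hstep⟩, hacc⟩ := hp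
  refine ⟨⟨fun k => p ⟨k, by simp; omega⟩, ⟨h0, fun k => ?_⟩, rfl⟩,
    fun k => p ⟨u.length + k, by simp; omega⟩, ⟨rfl, fun k => ?_⟩, ?_⟩
  · have := hstep ⟨k, by simp; omega⟩
    rwa [List.get_eq_getElem, List.getElem_append_left k.isLt] at this
  · have := hstep ⟨u.length + k, by simp⟩
    rw [List.get_eq_getElem, List.getElem_append_right (Nat.le_add_right _ _)] at this
    simp only [Nat.add_sub_cancel_left] at this
    exact this
  · have hlast : Fin.last (u ++ v).length = ⟨u.length + v.length, by simp⟩ :=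
      Fin.ext (List.length_append ..)
    rw [hlast] at hacc
    exact hacc

lemma exists_isAccPath_append_of_reaches {M : OneNFA α} {u v : List α} {q : M.Q}
    (hq : M.Reaches u q) (hv : (M.withStart q).Accepts v) :
    ∃ p, M.IsAccPath (u ++ v) p ∧ p ⟨u.length, by simp⟩ = q := by
  obtain ⟨p₁, ⟨h0, hstep₁⟩, rfl⟩ := hq
  obtain ⟨p₂, ⟨hq, hstep₂⟩, hacc⟩ := hv
  have hlen : (u ++ v).length = u.length + v.length := List.length_append ..
  let p : Fin ((u ++ v).length + 1) → M.Q := fun k =>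
    if h : (k : ℕ) ≤ u.length then p₁ ⟨k, by omega⟩ else p₂ ⟨k - u.length, by omega⟩
  have hp₁ : ∀ k (hk : k ≤ u.length), p ⟨k, by omega⟩ = p₁ ⟨k, by omega⟩ := fun k hk => by
    simp [p, hk]
  have hp₂ : ∀ j (hj : j ≤ v.length), p ⟨u.length + j, by omega⟩ = p₂ ⟨j, by omega⟩ := by
    intro j hj
    rcases Nat.eq_zero_or_pos j with rfl | hpos
    · simp only [p]
      rw [dif_pos (Nat.le_of_eq (Nat.add_zero _))]
      exact hq.symm
    · simp only [p]
      rw [dif_neg (by omega)]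
      exact congrArg p₂ (Fin.ext (Nat.add_sub_cancel_left ..))
  refine ⟨p, ⟨⟨hp₁ 0 (Nat.zero_le _) ▸ h0, fun ⟨i, hi⟩ => ?_⟩, ?_⟩, hp₁ _ le_rfl⟩
  · show p ⟨i + 1, by omega⟩ ∈ M.next (p ⟨i, by omega⟩) (u ++ v)[i]
    rcases lt_or_ge i u.length with hiu | hiu
    · rw [hp₁ (i + 1) hiu, hp₁ i hiu.le, List.getElem_append_left hiu]
      exact hstep₁ ⟨i, hiu⟩
    · obtain ⟨j, rfl⟩ := Nat.exists_eq_add_of_le hiu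
      change p ⟨u.length + (j + 1), by omega⟩ ∈ M.next (p ⟨u.length + j, by omega⟩) _
      rw [hp₂ (j + 1) (by omega), hp₂ j (by omega), List.getElem_append_right hiu]
      simp only [Nat.add_sub_cancel_left]
      exact hstep₂ ⟨j, by omega⟩
  · have hlast : Fin.last (u ++ v).length = ⟨u.length + v.length, by omega⟩ := Fin.ext hlen
    rw [hlast, hp₂ _ le_rfl]
    exact hacc

lemma accepts_append_iff (M : OneNFA α) (u v : List α) :
    M.Accepts (u ++ v) ↔ ∃ q, M.Reaches u q ∧ (M.withStart q).Accepts v := by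
  constructor
  · rintro ⟨p, hp⟩
    exact ⟨_, reaches_and_accepts_of_isAccPath_append hp⟩
  · rintro ⟨q, hq, hv⟩
    obtain ⟨p, hp, -⟩ := exists_isAccPath_append_of_reaches hq hv
    exact ⟨p, hp⟩

lemma subsingleton_reaches_and_accepts {M : OneNFA α} {u v : List α}
    (hun : {p | M.IsAccPath (u ++ v) p}.Subsingleton) :
    {q | M.Reaches u q ∧ (M.withStart q).Accepts v}.Subsingleton := by
  rintro q ⟨hq, hv⟩ q' ⟨hq', hv'⟩
  obtain ⟨p, hp, rfl⟩ := exists_isAccPath_append_of_reaches hq hv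
  obtain ⟨p', hp', rfl⟩ := exists_isAccPath_append_of_reaches hq' hv'
  rw [hun hp hp']

lemma card_le_sc_of_accepts_append_iff_ne {A : Type} [Fintype A] [DecidableEq A]
    (M : OneNFA α) (u v : A → List α) (hA : Fintype.card A ≠ 1)
    (hacc : ∀ a b, M.Accepts (u a ++ v b) ↔ a ≠ b)
    (hun : ∀ a b, {p | M.IsAccPath (u a ++ v b) p}.Subsingleton) :
    Fintype.card A ≤ M.sc := by
  classical
  let B : Matrix A M.Q ℚ := .of fun a q => if M.Reaches (u a) q then 1 else 0
  let C : Matrix M.Q A ℚ := .of fun q b => if (M.withStart q).Accepts (v b) then 1 else 0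
  have hBC : B * C = .of (fun _ _ => 1) - 1 := by
    ext a b
    simp only [B, C, Matrix.mul_apply, Matrix.of_apply, ite_zero_mul_ite_zero, mul_one,
      Fintype.sum_ite_of_subsingleton (subsingleton_reaches_and_accepts (hun a b)),
      ← accepts_append_iff, hacc, Matrix.sub_apply, Matrix.one_apply]
    by_cases hab : a = b <;> simp [hab]
  calc Fintype.card A = (B * C).rank := by
        rw [hBC, Matrix.rank_allOnes_sub_one (by exact_mod_cast hA)]
    _ ≤ B.rank := Matrix.rank_mul_le_left B C
    _ ≤ M.sc := Matrix.rank_le_card_width B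

end OneNFA

section Families

variable {α : Type} {M : ℕ → OneNFA α}

lemma reachUnambiguous1_of_forall (hM : ∀ n, (M n).ReachUnambiguous) (L : PromiseFamily α) :
    ReachUnambiguous1 M L :=
  fun n x _ i _ _ _ hp _ hp' => hM n (x.take i) _ _ hp.1 hp'.1 (hp.2.trans hp'.2.symm)

lemma acceptFew1_of_forall_reachUnambiguous (hsize : PolySize1 M)
    (hM : ∀ n, (M n).ReachUnambiguous) (L : PromiseFamily α) : AcceptFew1 M L := by
  obtain ⟨P, hP⟩ := hsize
  refine ⟨P.toMvPolynomial 0, fun n x _ => ?_⟩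
  rw [MvPolynomial.eval_toMvPolynomial]
  exact (OneNFA.ncard_accPaths_le_sc (hM n) x).trans (hP n)

end Families

/-- The state is (position, saturating at `N`; symbol read at position `i`; whether the symbol
at position `k` differed from it). -/
def symbolsDifferDFA (α : Type) [DecidableEq α] (N i k : ℕ) :
    DFA α (Fin (N + 1) × Option α × Bool) where
  step s a := (⟨min (s.1 + 1) N, by omega⟩, if (s.1 : ℕ) = i then some a else s.2.1,
    if (s.1 : ℕ) = k then decide (some a ≠ s.2.1) else s.2.2)
  start := (0, none, false)
  accept := {s | s.2.2 = true}

section symbolsDifferDFA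

variable {α : Type} [DecidableEq α] {N i k : ℕ}

lemma eval_symbolsDifferDFA (hik : i < k) (hkN : k < N) (x : List α) :
    (((symbolsDifferDFA α N i k).eval x).1 : ℕ) = min x.length N ∧
      ((symbolsDifferDFA α N i k).eval x).2.1 = x[i]? ∧
      (((symbolsDifferDFA α N i k).eval x).2.2 = true ↔ k < x.length ∧ x[k]? ≠ x[i]?) := by
  induction x using List.reverseRecOn with
  | nil => simp [symbolsDifferDFA]
  | append_singleton x a ih =>
    obtain ⟨ht, hb, hr⟩ := ih
    rw [DFA.eval_append_singleton]
    generalize (symbolsDifferDFA α N i k).eval x = s at ht hb hr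
    obtain ⟨t, b, r⟩ := s
    simp only at ht hb hr
    subst hb
    simp only [symbolsDifferDFA, ht, List.length_append, List.length_singleton]
    refine ⟨by omega, ?_, ?_⟩
    · rcases lt_trichotomy x.length i with hlt | rfl | hgt
      · rw [if_neg (by omega), List.getElem?_eq_none (by omega),
          List.getElem?_eq_none (by simp; omega)]
      · rw [if_pos (by omega), List.getElem?_concat_length]
      · rw [if_neg (by omega), List.getElem?_append_left hgt]
    · rcases lt_trichotomy x.length k with hlt | rfl | hgt
      · rw [if_neg (by omega), hr]
        exact ⟨fun h => absurd h.1 (by omega), fun h => absurd h.1 (by omega)⟩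
      · rw [if_pos (by omega), List.getElem?_concat_length, List.getElem?_append_left hik]
        simp
      · rw [if_neg (by omega), hr, List.getElem?_append_left hgt,
          List.getElem?_append_left (hik.trans hgt)]
        exact and_congr_left fun _ => ⟨fun _ => by omega, fun _ => hgt⟩

lemma mem_accepts_symbolsDifferDFA (hik : i < k) (hkN : k < N) (x : List α) :
    x ∈ (symbolsDifferDFA α N i k).accepts ↔ k < x.length ∧ x[k]? ≠ x[i]? :=
  (eval_symbolsDifferDFA hik hkN x).2.2

end symbolsDifferDFA

lemma List.ofFn_append_ofFn_inj {β : Type*} {m : ℕ} {u v u' v' : Fin m → β} :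
    List.ofFn u ++ List.ofFn v = List.ofFn u' ++ List.ofFn v' ↔ u = u' ∧ v = v' := by
  refine ⟨fun h => ?_, fun ⟨hu, hv⟩ => hu ▸ hv ▸ rfl⟩
  obtain ⟨hu, hv⟩ := List.append_inj h (by simp)
  exact ⟨List.ofFn_injective hu, List.ofFn_injective hv⟩

def halvesDifferProblem : PromiseFamily Bool where
  pos n := {x | ∃ u v : Fin (n + 1) → Bool, u ≠ v ∧ x = List.ofFn u ++ List.ofFn v}
  neg n := {x | ∃ u : Fin (n + 1) → Bool, x = List.ofFn u ++ List.ofFn u}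
  disj _ := Set.disjoint_left.2 <| by
    rintro _ ⟨u, v, huv, rfl⟩ ⟨w, hw⟩
    obtain ⟨rfl, rfl⟩ := List.ofFn_append_ofFn_inj.1 hw
    exact huv rfl

def halvesDiffer : Family := ⟨Bool, halvesDifferProblem⟩

def halvesDifferNFA (n : ℕ) : OneNFA Bool :=
  OneNFA.ofDFAs fun j : Fin (n + 1) => symbolsDifferDFA Bool (2 * n + 2) j (n + 1 + j)

lemma halvesDifferNFA_accepts_iff {n : ℕ} (u v : Fin (n + 1) → Bool) :
    (halvesDifferNFA n).Accepts (List.ofFn u ++ List.ofFn v) ↔ u ≠ v := by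
  rw [halvesDifferNFA, OneNFA.accepts_ofDFAs_iff, Function.ne_iff]
  refine exists_congr fun j => ?_
  rw [mem_accepts_symbolsDifferDFA (by omega) (by omega),
    List.getElem?_append_left (i := j) (by simp [j.isLt]),
    List.getElem?_append_right (i := n + 1 + j) (by simp)]
  simp only [List.length_append, List.length_ofFn, List.getElem?_ofFn, j.isLt,
    Nat.add_sub_cancel_left, dif_pos, ne_eq, Option.some_inj, ne_comm (a := v _)]
  exact and_iff_right (by omega)

lemma halvesDifferNFA_polySize : PolySize1 halvesDifferNFA := by
  refine ⟨(Polynomial.X + 1) * ((2 * Polynomial.X + 3) * 6) + 1, fun n => ?_⟩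
  simp [halvesDifferNFA, OneNFA.sc_ofDFAs]

lemma halvesDiffer_mem_oneReachU : halvesDiffer ∈ oneReachU := by
  have hM n : (halvesDifferNFA n).ReachUnambiguous := OneNFA.reachUnambiguous_ofDFAs _
  refine ⟨halvesDifferNFA, halvesDifferNFA_polySize,
    acceptFew1_of_forall_reachUnambiguous halvesDifferNFA_polySize hM _,
    reachUnambiguous1_of_forall hM _, fun n => ⟨?_, ?_⟩⟩
  · rintro _ ⟨u, v, huv, rfl⟩
    exact (halvesDifferNFA_accepts_iff u v).2 huv
  · rintro _ ⟨u, rfl⟩ h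
    exact (halvesDifferNFA_accepts_iff u u).1 h rfl

lemma two_pow_le_sc_of_solves_halvesDiffer {M : ℕ → OneNFA Bool}
    (hun : Unambiguous1 M halvesDifferProblem) (hsolve : Solves1 M halvesDifferProblem) (n : ℕ) :
    2 ^ (n + 1) ≤ (M n).sc := by
  have hacc (u v : Fin (n + 1) → Bool) : (M n).Accepts (List.ofFn u ++ List.ofFn v) ↔ u ≠ v := by
    refine ⟨?_, fun huv => (hsolve n).1 _ ⟨u, v, huv, rfl⟩⟩
    rintro h rfl
    exact (hsolve n).2 _ ⟨u, rfl⟩ h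
  have hvalid (u v : Fin (n + 1) → Bool) :
      List.ofFn u ++ List.ofFn v ∈ halvesDifferProblem.valid n := by
    by_cases huv : u = v
    · exact Or.inr ⟨u, huv ▸ rfl⟩
    · exact Or.inl ⟨u, v, huv, rfl⟩
  simpa using (M n).card_le_sc_of_accepts_append_iff_ne (fun u => List.ofFn u)
    (fun v => List.ofFn v) (by simp) hacc fun u v => hun n _ (hvalid u v)

lemma halvesDiffer_not_mem_oneU : halvesDiffer ∉ oneU := by
  rintro ⟨M, ⟨P, hP⟩, hun, hsolve⟩
  obtain ⟨n, hn⟩ := P.exists_eval_lt_two_pow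
  have := (two_pow_le_sc_of_solves_halvesDiffer hun hsolve n).trans (hP n)
  have := Nat.pow_lt_pow_right one_lt_two n.lt_succ_self
  omega

/-- `1ReachU ⊄ 1U`. -/
theorem oneReachU_not_subset_oneU :
    ∃ F : Family, F ∈ oneReachU ∧ F ∉ oneU :=
  ⟨halvesDiffer, halvesDiffer_mem_oneReachU, halvesDiffer_not_mem_oneU⟩
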